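/- Let G(E) be a well-formed TFG for (N1,m1) ▷_E (N2,m2), with both nets safe, and C its node concurrency relation. If v C w with v ∉ succ(w) and w ∉ succ(v), then one of the following holds: (Redundancy) there exists a nondead node v0 and a redundancy arc v0 →• w0 such that (v,w) or (w,v) lies in (succ(v0) \ succ(w0)) × succ(w0); or (Distinct) there exist two distinct roots v0, w0 with v0 C w0, v ∈ succ(v0) and w ∈ succ(w0). -/

import Mathlib

open Finset

/-- A Petri net over a type of places `P`. -/
structure PetriNet (P : Type) where
  Trans : Type
  pre : Trans → P → ℕ
  post : Trans → P → ℕ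

/-- Firing relation between markings. -/
def PetriNet.fire {P : Type} (N : PetriNet P) (m m' : P → ℕ) : Prop :=
  ∃ t : N.Trans, (∀ p, N.pre t p ≤ m p) ∧ ∀ p, m' p = m p - N.pre t p + N.post t p

/-- Reachability of a marking from an initial one. -/
def PetriNet.reach {P : Type} (N : PetriNet P) (m0 m : P → ℕ) : Prop :=
  Relation.ReflTransGen N.fire m0 m

/-- A marked net is safe (1-bounded) when every reachable marking has at most one token per place. -/
def PetriNet.Safe {P : Type} (N : PetriNet P) (m0 : P → ℕ) : Prop :=
  ∀ m, N.reach m0 m → ∀ p, m p ≤ 1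

/-- Two places are concurrent when some reachable marking marks both positively. -/
def PetriNet.ConcPlaces {P : Type} (N : PetriNet P) (m0 : P → ℕ) (p q : P) : Prop :=
  ∃ m, N.reach m0 m ∧ 0 < m p ∧ 0 < m q

/-- A Token Flow Graph: redundancy arcs `R`, agglomeration arcs `A` (disjoint from `R`,
enforced in well-formedness), and constant nodes given by `kval`. -/
structure TFG (V : Type) [DecidableEq V] where
  R : Finset (V × V)
  A : Finset (V × V)
  kval : V → Option ℕ

variable {V : Type} [DecidableEq V]

def TFG.Edge (G : TFG V) (v w : V) : Prop := (v, w) ∈ G.R ∨ (v, w) ∈ G.A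

/-- `G.Reach v w` means `v →* w`. -/
def TFG.Reach (G : TFG V) : V → V → Prop := Relation.ReflTransGen G.Edge

/-- Successor set `succ(v)` (includes `v` itself). -/
def TFG.succs (G : TFG V) (v : V) : Set V := {w | G.Reach v w}

/-- A root has no incoming arc. -/
def TFG.IsRoot (G : TFG V) (v : V) : Prop := ∀ w, ¬ G.Edge w v

/-- A ∘-leaf has no outgoing agglomeration arc. -/
def TFG.IsCircLeaf (G : TFG V) (v : V) : Prop := ∀ w, (v, w) ∉ G.A

/-- The set `X` such that `v ∘→ X` (agglomeration children of `v`). -/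
def TFG.aggChildren (G : TFG V) (v : V) : Finset V :=
  (G.A.filter (fun e => e.1 = v)).image Prod.snd

/-- The set `X` such that `X →• v` (redundancy parents of `v`). -/
def TFG.redParents (G : TFG V) (v : V) : Finset V :=
  (G.R.filter (fun e => e.2 = v)).image Prod.fst

/-- A configuration is a partial valuation of the nodes; it must agree with constant nodes. -/
def TFG.IsConfig (G : TFG V) (c : V → Option ℕ) : Prop :=
  ∀ v n, G.kval v = some n → c v = some n

/-- A configuration is total when it is defined on every node. -/
def TotalConf (c : V → Option ℕ) : Prop := ∀ v, c v ≠ none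

/-- Value of a configuration at a node (0 if undefined). -/
def cval (c : V → Option ℕ) (v : V) : ℕ := (c v).getD 0

/-- Well-definedness of a configuration: conditions (CBot) and (CEq). -/
def TFG.WellDef (G : TFG V) (c : V → Option ℕ) : Prop :=
  (∀ v w, G.Edge v w → (c v = none ↔ c w = none)) ∧
  (∀ v n, c v = some n →
    ((G.aggChildren v).Nonempty → n = ∑ w ∈ G.aggChildren v, cval c w) ∧
    ((G.redParents v).Nonempty → n = ∑ w ∈ G.redParents v, cval c w))

/-- A system of reduction equations: `(v, X)` stands for the equation `v = ∑_{w ∈ X} w`. -/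
abbrev EqSys (V : Type) := Finset (V × Finset V)

/-- A (non-negative integer) solution of the system `E`. -/
def Solves (E : EqSys V) (s : V → ℕ) : Prop :=
  ∀ e ∈ E, s e.1 = ∑ w ∈ e.2, s w

/-- `E, ⟦c⟧` is consistent: some solution of `E` extends the partial valuation `c`. -/
def ConsistentWith (E : EqSys V) (c : V → Option ℕ) : Prop :=
  ∃ s : V → ℕ, Solves E s ∧ ∀ v n, c v = some n → s v = n

/-- Variables occurring in `E`. -/
def fvars (E : EqSys V) : Set V := {v | ∃ e ∈ E, v = e.1 ∨ v ∈ e.2}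

/-- View a marking over the set of places `P` as a partial configuration over `V`. -/
def mconf (P : Set V) [DecidablePred (· ∈ P)] (m : ↥P → ℕ) : V → Option ℕ :=
  fun v => if h : v ∈ P then some (m ⟨v, h⟩) else none

/-- Restriction of a configuration to a set of places, seen as a marking. -/
def restrict (c : V → Option ℕ) (P : Set V) : ↥P → ℕ := fun p => cval c ↑p

/-- Compatibility `c ≡ m` of a configuration with a marking on `P`. -/
def CompatM (c : V → Option ℕ) (P : Set V) (m : ↥P → ℕ) : Prop :=
  ∀ p : ↥P, c ↑p = some (m p)

/-- A solution of `E` agrees with a marking on `P`. -/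
def AgreesOn (s : V → ℕ) (P : Set V) (m : ↥P → ℕ) : Prop := ∀ p : ↥P, s ↑p = m p

/-- `E`-equivalence `(N1,m1) ▷_E (N2,m2)`: conditions (A1), (A2), (A3). -/
structure EEquiv (E : EqSys V) (P1 P2 : Set V)
    (N1 : PetriNet ↥P1) (m1 : ↥P1 → ℕ) (N2 : PetriNet ↥P2) (m2 : ↥P2 → ℕ) : Prop where
  A1l : ∀ m, N1.reach m1 m → ∃ s, Solves E s ∧ AgreesOn s P1 m
  A1r : ∀ m, N2.reach m2 m → ∃ s, Solves E s ∧ AgreesOn s P2 m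
  A2 : ∃ s, Solves E s ∧ AgreesOn s P1 m1 ∧ AgreesOn s P2 m2
  A3 : ∀ m1' m2', (∃ s, Solves E s ∧ AgreesOn s P1 m1' ∧ AgreesOn s P2 m2') →
      (N1.reach m1 m1' ↔ N2.reach m2 m2')

/-- Well-formedness of a TFG for an equivalence statement: conditions (T1)–(T6). -/
structure WellFormed (G : TFG V) (E : EqSys V) (P1 P2 : Set V) : Prop where
  T1 : {v | G.kval v = none} = P1 ∪ P2 ∪ fvars E
  T2 : ∀ v, G.kval v ≠ none → G.IsRoot v
  T3a : ∀ p p' q, (p, q) ∈ G.A → G.Edge p' q → p' = p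
  T3b : ∀ p q, ¬((p, q) ∈ G.R ∧ (p, q) ∈ G.A)
  T4 : ∀ v X, ((X = G.aggChildren v ∨ X = G.redParents v) ∧ X.Nonempty) ↔ (v, X) ∈ E
  T5 : ∀ v, ¬ Relation.TransGen G.Edge v v
  T6root : ∀ v, G.kval v = none → (G.IsRoot v ↔ v ∈ P2)
  T6leaf : ∀ v, G.kval v = none → (G.IsCircLeaf v ↔ v ∈ P1)

/-- Node concurrency relation of the TFG: both nodes are positive in some
total, well-defined configuration whose restriction to `N2` is reachable. -/
def NodeConc (G : TFG V) (P2 : Set V) [DecidablePred (· ∈ P2)]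
    (N2 : PetriNet ↥P2) (m2 : ↥P2 → ℕ) (v w : V) : Prop :=
  ∃ c, G.IsConfig c ∧ TotalConf c ∧ G.WellDef c ∧ N2.reach m2 (restrict c P2) ∧
    0 < cval c v ∧ 0 < cval c w

/-!
A total well-defined configuration `c` whose restriction to the places of `N2` is reachable
takes values in `{0, 1}` on free nodes. Indeed, below a node `t` one can *reroute* `c`: every
agglomeration passes its whole value to a single child, every redundancy node takes the sum of
its parents. This is again a solution of `E`, unchanged on the roots, hence on the places of
`N2`; by (A3) its restriction to the places of `N1` is reachable, and following the chosen
children from `t` ends in a place of `N1` carrying the value of `t`, so safety of `N1` bounds it.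
Rerouting also shows that a positive node `t` below a positive node `z` is joined to `z` by a
path of positive nodes: two positive redundancy parents of `t`, one inside and one outside
`succ(z)`, would give `t` the value `2`.

Climbing positive parents from `v` and from `w` reaches roots. Distinct roots give (Distinct).
From a common root, follow the two positive paths down to where they part: parting at an
agglomeration gives its node the value `2`; parting at a redundancy arc `u →• a` towards `v`
gives (Redundancy) unless `w ∈ succ(a)`, in which case both paths restart from `a`.
-/

open Relation

theorem Relation.wellFounded_of_acyclic {α : Type*} {r : α → α → Prop} (S : Finset α)
    (hS : ∀ a b, r a b → a ∈ S) (hac : ∀ a, ¬ TransGen r a a) : WellFounded r := by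
  classical
  refine Subrelation.wf (fun {a b} (hab : r a b) => ?_)
    (InvImage.wf (fun b => S.filter (TransGen r · b)) wellFounded_lt)
  have hsub : S.filter (TransGen r · a) ⊆ S.filter (TransGen r · b) := fun x hx => by
    rw [mem_filter] at hx ⊢
    exact ⟨hx.1, hx.2.tail hab⟩
  refine (Finset.ssubset_iff_of_subset hsub).mpr ⟨a, ?_, fun ha => hac a (mem_filter.mp ha).2⟩
  exact mem_filter.mpr ⟨hS a b hab, TransGen.single hab⟩

namespace TFG

variable {G : TFG V}

theorem mem_aggChildren {u y : V} : y ∈ G.aggChildren u ↔ (u, y) ∈ G.A := by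
  simp [aggChildren]

theorem mem_redParents {u x : V} : x ∈ G.redParents u ↔ (x, u) ∈ G.R := by
  simp [redParents]

theorem wellFounded_edge (hac : ∀ v, ¬ TransGen G.Edge v v) : WellFounded G.Edge :=
  Relation.wellFounded_of_acyclic ((G.R ∪ G.A).image Prod.fst)
    (fun a b h => mem_image.mpr ⟨(a, b), by rcases h with h | h <;> simp [h], rfl⟩) hac

theorem wellFounded_flip_edge (hac : ∀ v, ¬ TransGen G.Edge v v) :
    WellFounded (flip G.Edge) :=
  Relation.wellFounded_of_acyclic ((G.R ∪ G.A).image Prod.snd)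
    (fun a b h => mem_image.mpr ⟨(b, a), by rcases h with h | h <;> simp [h], rfl⟩)
    (fun a h => hac a (transGen_swap.mp h))

theorem not_transGen_of_isRoot {p z : V} (hp : G.IsRoot p) : ¬ TransGen G.Edge z p := fun h =>
  let ⟨b, _, hb⟩ := TransGen.tail'_iff.mp h
  hp b hb

def IsAggChoice (G : TFG V) (ch : V → V) : Prop :=
  ∀ u, (G.aggChildren u).Nonempty → ch u ∈ G.aggChildren u

theorem exists_aggChoice_toward (G : TFG V) (x : V) :
    ∃ ch, G.IsAggChoice ch ∧ ∀ u y, y ∈ G.aggChildren u → G.Reach y x → G.Reach (ch u) x := by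
  have h : ∀ u, ∃ y, ((G.aggChildren u).Nonempty → y ∈ G.aggChildren u) ∧
      ((∃ y' ∈ G.aggChildren u, G.Reach y' x) → y ∈ G.aggChildren u ∧ G.Reach y x) := by
    intro u
    by_cases hx : ∃ y' ∈ G.aggChildren u, G.Reach y' x
    · obtain ⟨y, hy, hyx⟩ := hx
      exact ⟨y, fun _ => hy, fun _ => ⟨hy, hyx⟩⟩
    · by_cases hne : (G.aggChildren u).Nonempty
      · exact ⟨hne.choose, fun _ => hne.choose_spec, fun h => absurd h hx⟩
      · exact ⟨u, fun h => absurd h hne, fun h => absurd h hx⟩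
  choose ch hch using h
  exact ⟨ch, fun u hu => (hch u).1 hu, fun u y hy hyx => ((hch u).2 ⟨y, hy, hyx⟩).2⟩

noncomputable def reroute (hG : WellFounded G.Edge) (s : V → ℕ) (ch : V → V) (z : V) :
    V → ℕ := by
  classical
  exact hG.fix fun u rec =>
    if TransGen G.Edge z u then
      if (G.redParents u).Nonempty then
        ∑ p ∈ (G.redParents u).attach, rec p (Or.inl (mem_redParents.mp p.2))
      else if hA : ∃ q, (q, u) ∈ G.A then
        if u = ch hA.choose then rec hA.choose (Or.inr hA.choose_spec) else 0
      else s u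
    else s u

end TFG

namespace WellFormed

variable {G : TFG V} {E : EqSys V} {P1 P2 : Set V}

theorem kval_eq_none_iff (hwf : WellFormed G E P1 P2) {v : V} :
    G.kval v = none ↔ v ∈ P1 ∪ P2 ∪ fvars E :=
  Set.ext_iff.mp hwf.T1 v

theorem kval_eq_none_of_edge (hwf : WellFormed G E P1 P2) {x u : V} (h : G.Edge x u) :
    G.kval u = none := by
  by_contra hk
  exact hwf.T2 u hk x h

theorem kval_eq_none_of_aggChildren_nonempty (hwf : WellFormed G E P1 P2) {u : V}
    (h : (G.aggChildren u).Nonempty) : G.kval u = none :=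
  hwf.kval_eq_none_iff.mpr <| .inr ⟨_, (hwf.T4 u _).mp ⟨.inl rfl, h⟩, .inl rfl⟩

theorem isRoot_of_mem_P2 (hwf : WellFormed G E P1 P2) {p : V} (hp : p ∈ P2) : G.IsRoot p :=
  (hwf.T6root p (hwf.kval_eq_none_iff.mpr (.inl (.inr hp)))).mpr hp

theorem redParents_eq_empty_of_mem_A (hwf : WellFormed G E P1 P2) {q u : V}
    (hq : (q, u) ∈ G.A) : G.redParents u = ∅ := by
  refine eq_empty_iff_forall_notMem.mpr fun x hx => ?_
  have hR := TFG.mem_redParents.mp hx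
  obtain rfl := hwf.T3a q x u hq (.inl hR)
  exact hwf.T3b x u ⟨hR, hq⟩

theorem reach_of_transGen_of_mem_A (hwf : WellFormed G E P1 P2) {z n y : V}
    (hn : (n, y) ∈ G.A) (hzy : TransGen G.Edge z y) : G.Reach z n := by
  obtain ⟨b, hzb, hby⟩ := TransGen.tail'_iff.mp hzy
  rwa [← hwf.T3a n b y hn hby]

theorem eq_sum_aggChildren (hwf : WellFormed G E P1 P2) {s : V → ℕ} (hs : Solves E s) {u : V}
    (h : (G.aggChildren u).Nonempty) : s u = ∑ y ∈ G.aggChildren u, s y :=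
  hs _ ((hwf.T4 u _).mp ⟨.inl rfl, h⟩)

theorem eq_sum_redParents (hwf : WellFormed G E P1 P2) {s : V → ℕ} (hs : Solves E s) {u : V}
    (h : (G.redParents u).Nonempty) : s u = ∑ x ∈ G.redParents u, s x :=
  hs _ ((hwf.T4 u _).mp ⟨.inr rfl, h⟩)

theorem solves_cval (hwf : WellFormed G E P1 P2) {c : V → Option ℕ} (htot : TotalConf c)
    (hwd : G.WellDef c) : Solves E (cval c) := by
  rintro ⟨u, X⟩ he
  obtain ⟨n, hn⟩ := Option.ne_none_iff_exists'.mp (htot u)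
  obtain ⟨rfl | rfl, hne⟩ := (hwf.T4 u X).mpr he
  · simpa [cval, hn] using (hwd.2 u n hn).1 hne
  · simpa [cval, hn] using (hwd.2 u n hn).2 hne

theorem pos_of_mem_A (hwf : WellFormed G E P1 P2) {s : V → ℕ} (hs : Solves E s) {q t : V}
    (hq : (q, t) ∈ G.A) (ht : 0 < s t) : 0 < s q := by
  have hmem := TFG.mem_aggChildren.mpr hq
  rw [hwf.eq_sum_aggChildren hs ⟨t, hmem⟩]
  exact ht.trans_le (single_le_sum (fun _ _ => Nat.zero_le _) hmem)

theorem exists_pos_redParent (hwf : WellFormed G E P1 P2) {s : V → ℕ} (hs : Solves E s)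
    {t : V} (hne : (G.redParents t).Nonempty) (ht : 0 < s t) :
    ∃ p ∈ G.redParents t, 0 < s p :=
  sum_pos_iff.mp (hwf.eq_sum_redParents hs hne ▸ ht)

theorem exists_pos_parent (hwf : WellFormed G E P1 P2) {s : V → ℕ} (hs : Solves E s)
    {t : V} (hroot : ¬ G.IsRoot t) (ht : 0 < s t) : ∃ p, G.Edge p t ∧ 0 < s p := by
  obtain ⟨q, hR | hA⟩ : ∃ q, G.Edge q t := by simpa [TFG.IsRoot] using hroot
  · obtain ⟨p, hp, hpos⟩ := hwf.exists_pos_redParent hs ⟨q, TFG.mem_redParents.mpr hR⟩ ht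
    exact ⟨p, .inl (TFG.mem_redParents.mp hp), hpos⟩
  · exact ⟨q, .inr hA, hwf.pos_of_mem_A hs hA ht⟩

end WellFormed

theorem EEquiv.le_one_of_solves {V : Type} {E : EqSys V} {P1 P2 : Set V} {N1 : PetriNet ↥P1}
    {m1 : ↥P1 → ℕ} {N2 : PetriNet ↥P2} {m2 : ↥P2 → ℕ} (heq : EEquiv E P1 P2 N1 m1 N2 m2)
    (hsafe1 : N1.Safe m1) {s : V → ℕ} (hs : Solves E s) (hreach : N2.reach m2 fun p => s p)
    {l : V} (hl : l ∈ P1) : s l ≤ 1 :=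
  hsafe1 _ ((heq.A3 _ _ ⟨s, hs, fun _ => rfl, fun _ => rfl⟩).mpr hreach) ⟨l, hl⟩

namespace TFG

variable {G : TFG V} {E : EqSys V} {P1 P2 : Set V} {N1 : PetriNet ↥P1} {m1 : ↥P1 → ℕ}
  {N2 : PetriNet ↥P2} {m2 : ↥P2 → ℕ} {hG : WellFounded G.Edge} {s : V → ℕ} {ch : V → V} {z : V}

theorem reroute_of_not_transGen {u : V} (h : ¬ TransGen G.Edge z u) :
    G.reroute hG s ch z u = s u := by
  rw [reroute, hG.fix_eq, if_neg h]

theorem reroute_of_redParents_nonempty {u : V} (h : TransGen G.Edge z u)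
    (hR : (G.redParents u).Nonempty) :
    G.reroute hG s ch z u = ∑ p ∈ G.redParents u, G.reroute hG s ch z p := by
  rw [reroute, hG.fix_eq, if_pos h, if_pos hR]
  exact sum_attach _ (fun p => G.reroute hG s ch z p)

theorem reroute_of_mem_A (hwf : WellFormed G E P1 P2) {q u : V} (h : TransGen G.Edge z u)
    (hq : (q, u) ∈ G.A) :
    G.reroute hG s ch z u = if u = ch q then G.reroute hG s ch z q else 0 := by
  have hA : ∃ q, (q, u) ∈ G.A := ⟨q, hq⟩
  obtain rfl : hA.choose = q := hwf.T3a q _ u hq (.inr hA.choose_spec)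
  rw [reroute, hG.fix_eq, if_pos h, if_neg (by simp [hwf.redParents_eq_empty_of_mem_A hq]),
    dif_pos hA]

theorem reroute_solves (hwf : WellFormed G E P1 P2) (hs : Solves E s)
    (hch : G.IsAggChoice ch) : Solves E (G.reroute hG s ch z) := by
  rintro ⟨n, X⟩ he
  obtain ⟨rfl | rfl, hne⟩ := (hwf.T4 n X).mpr he
  · by_cases hzn : G.Reach z n
    · have hy : ∀ y ∈ G.aggChildren n, G.reroute hG s ch z y =
          if y = ch n then G.reroute hG s ch z n else 0 := fun y hy =>
        have hA := mem_aggChildren.mp hy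
        reroute_of_mem_A hwf (TransGen.tail' hzn (.inr hA)) hA
      rw [sum_congr rfl hy, sum_ite_eq', if_pos (hch n hne)]
    · have hy : ∀ y ∈ G.aggChildren n, G.reroute hG s ch z y = s y := fun y hy =>
        reroute_of_not_transGen fun h =>
          hzn (hwf.reach_of_transGen_of_mem_A (mem_aggChildren.mp hy) h)
      rw [reroute_of_not_transGen fun h => hzn h.to_reflTransGen, sum_congr rfl hy]
      exact hwf.eq_sum_aggChildren hs hne
  · by_cases hzn : TransGen G.Edge z n
    · exact reroute_of_redParents_nonempty hzn hne
    · have hx : ∀ x ∈ G.redParents n, G.reroute hG s ch z x = s x := fun x hx =>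
        reroute_of_not_transGen fun h => hzn (h.tail (.inl (mem_redParents.mp hx)))
      rw [reroute_of_not_transGen hzn, sum_congr rfl hx]
      exact hwf.eq_sum_redParents hs hne

theorem reroute_eq_on_P2 (hwf : WellFormed G E P1 P2) :
    (fun p : ↥P2 => G.reroute hG s ch z p) = fun p : ↥P2 => s p :=
  funext fun p => reroute_of_not_transGen (not_transGen_of_isRoot (hwf.isRoot_of_mem_P2 p.2))

theorem exists_mem_P1_reroute_eq (hwf : WellFormed G E P1 P2) (hch : G.IsAggChoice ch)
    {u : V} (hzu : G.Reach z u) (hu : G.kval u = none) :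
    ∃ l ∈ P1, G.reroute hG s ch z l = G.reroute hG s ch z u := by
  induction u using (G.wellFounded_flip_edge hwf.T5).induction with
  | _ u ih =>
  by_cases hne : (G.aggChildren u).Nonempty
  · have hA := mem_aggChildren.mp (hch u hne)
    obtain ⟨l, hl, hlu⟩ := ih (ch u) (.inr hA) (hzu.tail (.inr hA))
      (hwf.kval_eq_none_of_edge (.inr hA))
    refine ⟨l, hl, hlu.trans ?_⟩
    rw [reroute_of_mem_A hwf (TransGen.tail' hzu (.inr hA)) hA, if_pos rfl]
  · exact ⟨u, (hwf.T6leaf u hu).mp fun y hy => hne ⟨y, mem_aggChildren.mpr hy⟩, rfl⟩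

theorem reroute_le_one (hwf : WellFormed G E P1 P2) (heq : EEquiv E P1 P2 N1 m1 N2 m2)
    (hsafe1 : N1.Safe m1) (hs : Solves E s) (hreach : N2.reach m2 fun p => s p)
    (hch : G.IsAggChoice ch) {u : V} (hzu : G.Reach z u) (hu : G.kval u = none) :
    G.reroute hG s ch z u ≤ 1 := by
  obtain ⟨l, hl, hlu⟩ := exists_mem_P1_reroute_eq hwf hch hzu hu
  rw [← hlu]
  refine heq.le_one_of_solves hsafe1 (reroute_solves hwf hs hch) ?_ hl
  rwa [reroute_eq_on_P2 hwf]

theorem reroute_le_of_reach (hwf : WellFormed G E P1 P2) (hch : G.IsAggChoice ch) {x : V}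
    (hsteer : ∀ u y, y ∈ G.aggChildren u → G.Reach y x → G.Reach (ch u) x)
    {u : V} (hzu : G.Reach z u) (hux : G.Reach u x) :
    G.reroute hG s ch z u ≤ G.reroute hG s ch z x := by
  induction u using (G.wellFounded_flip_edge hwf.T5).induction with
  | _ u ih =>
  obtain rfl | ⟨e, hue, hex⟩ := hux.cases_head
  · exact le_rfl
  by_cases hY : ∃ y ∈ G.aggChildren u, G.Reach y x
  · obtain ⟨y, hy, hyx⟩ := hY
    have hA := mem_aggChildren.mp (hch u ⟨y, hy⟩)
    calc G.reroute hG s ch z u = G.reroute hG s ch z (ch u) := by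
          rw [reroute_of_mem_A hwf (TransGen.tail' hzu (.inr hA)) hA, if_pos rfl]
      _ ≤ _ := ih (ch u) (.inr hA) (hzu.tail (.inr hA)) (hsteer u y hy hyx)
  · have hR : (u, e) ∈ G.R := hue.resolve_right fun hA => hY ⟨e, mem_aggChildren.mpr hA, hex⟩
    calc G.reroute hG s ch z u ≤ G.reroute hG s ch z e := by
          rw [reroute_of_redParents_nonempty (TransGen.tail' hzu hue) ⟨u, mem_redParents.mpr hR⟩]
          exact single_le_sum (fun _ _ => Nat.zero_le _) (mem_redParents.mpr hR)
      _ ≤ _ := ih e hue (hzu.tail hue) hex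

theorem le_one_of_solves (hwf : WellFormed G E P1 P2) (heq : EEquiv E P1 P2 N1 m1 N2 m2)
    (hsafe1 : N1.Safe m1) (hs : Solves E s) (hreach : N2.reach m2 fun p => s p) {t : V}
    (ht : G.kval t = none) : s t ≤ 1 := by
  obtain ⟨ch, hch, -⟩ := G.exists_aggChoice_toward t
  have hG := G.wellFounded_edge hwf.T5
  calc s t = G.reroute hG s ch t t := (reroute_of_not_transGen (hwf.T5 t)).symm
    _ ≤ 1 := reroute_le_one hwf heq hsafe1 hs hreach hch .refl ht

theorem eq_of_pos_of_mem_aggChildren (hwf : WellFormed G E P1 P2)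
    (heq : EEquiv E P1 P2 N1 m1 N2 m2) (hsafe1 : N1.Safe m1) (hs : Solves E s)
    (hreach : N2.reach m2 fun p => s p) {u a b : V} (ha : a ∈ G.aggChildren u)
    (hb : b ∈ G.aggChildren u) (hapos : 0 < s a) (hbpos : 0 < s b) : a = b := by
  by_contra hab
  have hu : s u ≤ 1 :=
    le_one_of_solves hwf heq hsafe1 hs hreach
      (hwf.kval_eq_none_of_aggChildren_nonempty ⟨a, ha⟩)
  have hsum : s a + s b ≤ s u :=
    hwf.eq_sum_aggChildren hs ⟨a, ha⟩ ▸ add_le_sum (fun _ _ => Nat.zero_le _) ha hb hab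
  omega

/-- Rerouting the value of `z` towards `x` puts at least `s z` on `x`, while `p` keeps `s p`;
both then flow into `t`, whose rerouted value is at most `1`. -/
theorem reach_of_pos_redParent (hwf : WellFormed G E P1 P2)
    (heq : EEquiv E P1 P2 N1 m1 N2 m2) (hsafe1 : N1.Safe m1) (hs : Solves E s)
    (hreach : N2.reach m2 fun p => s p) {z x p t : V} (hz : 0 < s z) (hzx : G.Reach z x)
    (hx : x ∈ G.redParents t) (hp : p ∈ G.redParents t) (hppos : 0 < s p) : G.Reach z p := by
  by_contra hzp
  obtain ⟨ch, hch, hsteer⟩ := G.exists_aggChoice_toward x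
  have hG := G.wellFounded_edge hwf.T5
  have hxp : x ≠ p := fun h => hzp (h ▸ hzx)
  have hzt : TransGen G.Edge z t := TransGen.tail' hzx (.inl (mem_redParents.mp hx))
  have hx' : s z ≤ G.reroute hG s ch z x :=
    (reroute_of_not_transGen (hwf.T5 z)).symm.le.trans
      (reroute_le_of_reach hwf hch hsteer .refl hzx)
  have hp' : G.reroute hG s ch z p = s p :=
    reroute_of_not_transGen fun h => hzp h.to_reflTransGen
  have ht' : G.reroute hG s ch z x + G.reroute hG s ch z p ≤ G.reroute hG s ch z t := by
    rw [reroute_of_redParents_nonempty hzt ⟨x, hx⟩]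
    exact add_le_sum (fun _ _ => Nat.zero_le _) hx hp hxp
  have ht1 : G.reroute hG s ch z t ≤ 1 :=
    reroute_le_one hwf heq hsafe1 hs hreach hch hzt.to_reflTransGen
      (hwf.kval_eq_none_of_edge (.inl (mem_redParents.mp hx)))
  omega

def PosEdge (G : TFG V) (s : V → ℕ) (a b : V) : Prop :=
  G.Edge a b ∧ 0 < s a ∧ 0 < s b

theorem reach_of_posPath {a b : V} (h : ReflTransGen (G.PosEdge s) a b) : G.Reach a b :=
  ReflTransGen.mono (fun _ _ h => h.1) _ _ h

theorem exists_isRoot_posPath (hwf : WellFormed G E P1 P2) (hs : Solves E s) {t : V}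
    (ht : 0 < s t) : ∃ r, G.IsRoot r ∧ 0 < s r ∧ ReflTransGen (G.PosEdge s) r t := by
  induction t using (G.wellFounded_edge hwf.T5).induction with
  | _ t ih =>
  by_cases hroot : G.IsRoot t
  · exact ⟨t, hroot, ht, .refl⟩
  obtain ⟨p, hpt, hp⟩ := hwf.exists_pos_parent hs hroot ht
  obtain ⟨r, hr, hrpos, hrp⟩ := ih p hpt hp
  exact ⟨r, hr, hrpos, hrp.tail ⟨hpt, hp, ht⟩⟩

theorem posPath_of_reach (hwf : WellFormed G E P1 P2) (heq : EEquiv E P1 P2 N1 m1 N2 m2)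
    (hsafe1 : N1.Safe m1) (hs : Solves E s) (hreach : N2.reach m2 fun p => s p) {z t : V}
    (hz : 0 < s z) (ht : 0 < s t) (hzt : G.Reach z t) : ReflTransGen (G.PosEdge s) z t := by
  induction t using (G.wellFounded_edge hwf.T5).induction with
  | _ t ih =>
  obtain rfl | ⟨x, hzx, hxt⟩ := hzt.cases_tail
  · exact .refl
  obtain ⟨p, hpt, hp, hzp⟩ : ∃ p, G.Edge p t ∧ 0 < s p ∧ G.Reach z p := by
    by_cases hA : ∃ q, (q, t) ∈ G.A
    · obtain ⟨q, hq⟩ := hA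
      obtain rfl := hwf.T3a q x t hq hxt
      exact ⟨x, hxt, hwf.pos_of_mem_A hs hq ht, hzx⟩
    · have hx : x ∈ G.redParents t :=
        mem_redParents.mpr (hxt.resolve_right fun h => hA ⟨x, h⟩)
      obtain ⟨p, hp, hppos⟩ := hwf.exists_pos_redParent hs ⟨x, hx⟩ ht
      exact ⟨p, .inl (mem_redParents.mp hp), hppos,
        reach_of_pos_redParent hwf heq hsafe1 hs hreach hz hzx hx hp hppos⟩
  exact (ih p hpt hp hzp).tail ⟨hpt, hp, ht⟩

theorem exists_redundancy_split (hwf : WellFormed G E P1 P2)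
    (heq : EEquiv E P1 P2 N1 m1 N2 m2) (hsafe1 : N1.Safe m1) (hs : Solves E s)
    (hreach : N2.reach m2 fun p => s p) {v w : V} (hv : v ∉ G.succs w) (hw : w ∉ G.succs v)
    (hvpos : 0 < s v) (hwpos : 0 < s w) {u : V} (huv : ReflTransGen (G.PosEdge s) u v)
    (huw : ReflTransGen (G.PosEdge s) u w) :
    ∃ v0 w0 : V, 0 < s v0 ∧ (v0, w0) ∈ G.R ∧
      ((v ∈ G.succs v0 \ G.succs w0 ∧ w ∈ G.succs w0) ∨
       (w ∈ G.succs v0 \ G.succs w0 ∧ v ∈ G.succs w0)) := by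
  induction u using (G.wellFounded_flip_edge hwf.T5).induction with
  | _ u ih =>
  obtain rfl | ⟨a, ⟨hua, hupos, hapos⟩, hav⟩ := huv.cases_head
  · exact absurd (reach_of_posPath huw) hw
  obtain rfl | ⟨b, ⟨hub, -, hbpos⟩, hbw⟩ := huw.cases_head
  · exact absurd (reach_of_posPath huv) hv
  by_cases hab : a = b
  · subst hab
    exact ih a hua hav hbw
  rcases hua with huaR | huaA
  · by_cases haw : G.Reach a w
    · exact ih a (.inl huaR) hav
        (posPath_of_reach hwf heq hsafe1 hs hreach hapos hwpos haw)
    · exact ⟨u, a, hupos, huaR, .inr ⟨⟨reach_of_posPath huw, haw⟩, reach_of_posPath hav⟩⟩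
  rcases hub with hubR | hubA
  · by_cases hbv : G.Reach b v
    · exact ih b (.inl hubR)
        (posPath_of_reach hwf heq hsafe1 hs hreach hbpos hvpos hbv) hbw
    · exact ⟨u, b, hupos, hubR, .inl ⟨⟨reach_of_posPath huv, hbv⟩, reach_of_posPath hbw⟩⟩
  exact absurd (eq_of_pos_of_mem_aggChildren hwf heq hsafe1 hs hreach
    (mem_aggChildren.mpr huaA) (mem_aggChildren.mpr hubA) hapos hbpos) hab

end TFG

theorem concurrent_places_propagation_general {V : Type} [DecidableEq V] (G : TFG V) (E : EqSys V)
    (P1 P2 : Set V) [DecidablePred (· ∈ P2)]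
    (N1 : PetriNet ↥P1) (m1 : ↥P1 → ℕ) (N2 : PetriNet ↥P2) (m2 : ↥P2 → ℕ)
    (hwf : WellFormed G E P1 P2) (heq : EEquiv E P1 P2 N1 m1 N2 m2)
    (hsafe1 : N1.Safe m1)
    (v w : V) (hvw : NodeConc G P2 N2 m2 v w)
    (hv : v ∉ G.succs w) (hw : w ∉ G.succs v) :
    (∃ v0 w0 : V, NodeConc G P2 N2 m2 v0 v0 ∧ (v0, w0) ∈ G.R ∧
      ((v ∈ G.succs v0 \ G.succs w0 ∧ w ∈ G.succs w0) ∨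
       (w ∈ G.succs v0 \ G.succs w0 ∧ v ∈ G.succs w0))) ∨
    (∃ v0 w0 : V, v0 ≠ w0 ∧ G.IsRoot v0 ∧ G.IsRoot w0 ∧
      NodeConc G P2 N2 m2 v0 w0 ∧ v ∈ G.succs v0 ∧ w ∈ G.succs w0) := by
  obtain ⟨c, hconf, htot, hwd, hreach, hvpos, hwpos⟩ := hvw
  have hs := hwf.solves_cval htot hwd
  obtain ⟨r, hr, hrpos, hrv⟩ := TFG.exists_isRoot_posPath hwf hs hvpos
  obtain ⟨r', hr', hr'pos, hr'w⟩ := TFG.exists_isRoot_posPath hwf hs hwpos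
  by_cases hrr : r = r'
  · subst hrr
    obtain ⟨v0, w0, hv0, hR, hsplit⟩ :=
      TFG.exists_redundancy_split hwf heq hsafe1 hs hreach hv hw hvpos hwpos hrv hr'w
    exact .inl ⟨v0, w0, ⟨c, hconf, htot, hwd, hreach, hv0, hv0⟩, hR, hsplit⟩
  · exact .inr ⟨r, r', hrr, hr, hr', ⟨c, hconf, htot, hwd, hreach, hrpos, hr'pos⟩,
      TFG.reach_of_posPath hrv, TFG.reach_of_posPath hr'w⟩

theorem concurrent_places_propagation {V : Type} [DecidableEq V] (G : TFG V) (E : EqSys V)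
    (P1 P2 : Set V) [DecidablePred (· ∈ P1)] [DecidablePred (· ∈ P2)]
    (N1 : PetriNet ↥P1) (m1 : ↥P1 → ℕ) (N2 : PetriNet ↥P2) (m2 : ↥P2 → ℕ)
    (hwf : WellFormed G E P1 P2) (heq : EEquiv E P1 P2 N1 m1 N2 m2)
    (hsafe1 : N1.Safe m1) (hsafe2 : N2.Safe m2)
    (v w : V) (hvw : NodeConc G P2 N2 m2 v w)
    (hv : v ∉ G.succs w) (hw : w ∉ G.succs v) :
    (∃ v0 w0 : V, NodeConc G P2 N2 m2 v0 v0 ∧ (v0, w0) ∈ G.R ∧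
      ((v ∈ G.succs v0 \ G.succs w0 ∧ w ∈ G.succs w0) ∨
       (w ∈ G.succs v0 \ G.succs w0 ∧ v ∈ G.succs w0))) ∨
    (∃ v0 w0 : V, v0 ≠ w0 ∧ G.IsRoot v0 ∧ G.IsRoot w0 ∧
      NodeConc G P2 N2 m2 v0 w0 ∧ v ∈ G.succs v0 ∧ w ∈ G.succs w0) :=
  concurrent_places_propagation_general G E P1 P2 N1 m1 N2 m2 hwf heq hsafe1 v w hvw hv hw
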